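/- arXiv:math/0504212 — 6 statements merged into one kernel-verified Lean document; each statement's English description precedes it below -/
import Mathlib

section
/- Let G be a finitely generated, conjugacy separable group. Then the quotient group Aut(G)/Conj(G) is residually finite. -/
lemma finite_homs_of_fg {G : Type*} [Group G] (hfg : Group.FG G) (Q : Type*) [Group Q]
    [Finite Q] : Finite (G →* Q) := by
  obtain ⟨S, hS⟩ := hfg.1
  refine Finite.of_injective (fun f : G →* Q => (fun s : S => f s)) ?_
  intro f g h
  refine MonoidHom.eq_of_eqOn_dense hS ?_
  intro x hx
  exact congrFun h ⟨x, hx⟩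



/-- A group is residually finite if every nontrivial element remains nontrivial in some
finite quotient (equivalently, there is a homomorphism to a finite group sending it to a
nontrivial element). -/
def ResiduallyFinite (G : Type*) [Group G] : Prop :=
  ∀ g : G, g ≠ 1 → ∃ N : Subgroup G, N.Normal ∧ N.FiniteIndex ∧ g ∉ N

/-- A group is conjugacy separable if any two elements whose images are conjugate in every
finite quotient are already conjugate. -/
def ConjugacySeparable (G : Type*) [Group G] : Prop :=
  ∀ g h : G,
    (∀ (N : Subgroup G) [N.Normal] [N.FiniteIndex],
      IsConj (QuotientGroup.mk g : G ⧸ N) (QuotientGroup.mk h)) →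
    IsConj g h

/-- The group `Conj(G) ≤ Aut(G)` of conjugating automorphisms: automorphisms sending every
element to a conjugate of itself. -/
def conjAut (G : Type*) [Group G] : Subgroup (MulAut G) where
  carrier := {f | ∀ g : G, IsConj (f g) g}
  one_mem' := fun g => IsConj.refl g
  mul_mem' := by
    intro a b ha hb g
    exact (ha (b g)).trans (hb g)
  inv_mem' := by
    intro a ha g
    have h := (ha (a⁻¹ g)).symm
    simpa using h

instance conjAut_normal (G : Type*) [Group G] : (conjAut G).Normal := by
  constructor
  intro c hc f g
  have h := (f : MulAut G).toMonoidHom.map_isConj (hc ((f⁻¹ : MulAut G) g))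
  simpa using h

/-- **Grossman's lemma.** If `G` is a finitely generated, conjugacy separable group, then
`Aut(G)/Conj(G)` is residually finite. -/
theorem aut_mod_conjAut_residuallyFinite (G : Type*) [Group G]
    (hfg : Group.FG G) (hcs : ConjugacySeparable G) :
    ResiduallyFinite (MulAut G ⧸ conjAut G) := by
  intro fbar hfbar
  obtain ⟨f, rfl⟩ := QuotientGroup.mk_surjective fbar
  have hf : f ∉ conjAut G := fun hf => hfbar ((QuotientGroup.eq_one_iff f).mpr hf)
  have hf' : ¬ ∀ g : G, IsConj (f g) g := hf
  obtain ⟨g, hg⟩ := not_forall.mp hf'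
  -- get a finite-index normal subgroup separating the conjugacy classes of f g and g
  have key : ¬ ∀ (N : Subgroup G) [N.Normal] [N.FiniteIndex],
      IsConj (QuotientGroup.mk (f g) : G ⧸ N) (QuotientGroup.mk g) :=
    fun h => hg (hcs _ _ h)
  push_neg at key
  obtain ⟨N, hN1, hN2, hN3⟩ := key
  haveI := hN1; haveI := hN2
  haveI : Finite (G →* G ⧸ N) := finite_homs_of_fg hfg _
  -- the characteristic finite-index subgroup M ≤ N
  set M : Subgroup G := ⨅ φ : G →* (G ⧸ N), φ.ker with hM
  have hMmem : ∀ x : G, x ∈ M ↔ ∀ φ : G →* G ⧸ N, φ x = 1 := by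
    intro x; simp [hM, Subgroup.mem_iInf, MonoidHom.mem_ker]
  have hMN : M ≤ N := by
    intro x hx
    have h1 := (hMmem x).mp hx (QuotientGroup.mk' N)
    simpa [QuotientGroup.eq_one_iff] using h1
  haveI hMnormal : M.Normal := by
    constructor
    intro x hx c
    refine (hMmem _).mpr ?_
    intro ψ
    have h1 := (hMmem x).mp hx ψ
    simp [h1]
  haveI hMfi : M.FiniteIndex := by
    apply Subgroup.finiteIndex_iInf
    intro φ
    infer_instance
  have hchar : ∀ φ : MulAut G, Subgroup.map (φ : G →* G) M = M := by
    intro φ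
    apply le_antisymm
    · rintro _ ⟨x, hx, rfl⟩
      refine (hMmem _).mpr ?_
      intro ψ
      exact (hMmem x).mp hx (ψ.comp (φ : G →* G))
    · intro x hx
      refine ⟨φ⁻¹ x, ?_, by simp⟩
      refine (hMmem _).mpr ?_
      intro ψ
      have h1 := (hMmem x).mp hx (ψ.comp ((φ⁻¹ : MulAut G) : G →* G))
      simpa using h1
  -- the induced map on automorphism groups
  let Φ : MulAut G →* MulAut (G ⧸ M) :=
    { toFun := fun φ => QuotientGroup.congr M M φ (hchar φ)
      map_one' := by
        apply MulEquiv.ext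
        intro q
        induction q using QuotientGroup.induction_on with
        | H x => simp [QuotientGroup.congr_mk]
      map_mul' := by
        intro a b
        apply MulEquiv.ext
        intro q
        induction q using QuotientGroup.induction_on with
        | H x => simp [QuotientGroup.congr_mk] }
  have hΦ : ∀ (φ : MulAut G) (x : G),
      Φ φ (QuotientGroup.mk x) = QuotientGroup.mk (φ x) := fun φ x =>
    QuotientGroup.congr_mk M M φ (hchar φ) x
  haveI : Finite (G ⧸ M) := inferInstance
  haveI : Finite (MulAut (G ⧸ M)) := by
    refine Finite.of_injective (fun e : MulAut (G ⧸ M) => (e : G ⧸ M → G ⧸ M)) ?_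
    intro a b h
    exact MulEquiv.ext fun x => congrFun h x
  set K : Subgroup (MulAut G) := (conjAut (G ⧸ M)).comap Φ with hK
  haveI hKnormal : K.Normal := Subgroup.normal_comap Φ
  have hKfi : K.FiniteIndex := by
    constructor
    have h1 : K.index = (conjAut (G ⧸ M)).relIndex Φ.range := Subgroup.index_comap _ _
    have h2 : (conjAut (G ⧸ M)).relIndex Φ.range ∣ (conjAut (G ⧸ M)).index :=
      Subgroup.relIndex_dvd_index_of_normal _ _
    have h3 : (conjAut (G ⧸ M)).index ≠ 0 := Subgroup.index_ne_zero_of_finite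
    rw [h1]
    exact fun h0 => h3 (Nat.eq_zero_of_zero_dvd (h0 ▸ h2))
  have hle : conjAut G ≤ K := by
    intro c hc
    have hc' : ∀ x : G, IsConj (c x) x := hc
    show Φ c ∈ conjAut (G ⧸ M)
    intro q
    induction q using QuotientGroup.induction_on with
    | H x =>
      rw [hΦ]
      exact (QuotientGroup.mk' M).map_isConj (hc' x)
  have hfK : f ∉ K := by
    intro hfK
    have h1 : ∀ q : G ⧸ M, IsConj (Φ f q) q := hfK
    have h2 : IsConj (QuotientGroup.mk (f g) : G ⧸ M) (QuotientGroup.mk g) := by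
      have h0 := h1 (QuotientGroup.mk g)
      rwa [hΦ] at h0
    have h3 := (QuotientGroup.map M N (MonoidHom.id G) (by simpa using hMN)).map_isConj h2
    simp only [QuotientGroup.map_mk, MonoidHom.id_apply] at h3
    exact hN3 h3
  refine ⟨Subgroup.map (QuotientGroup.mk' (conjAut G)) K, ?_, ?_, ?_⟩
  · exact hKnormal.map _ (QuotientGroup.mk'_surjective _)
  · constructor
    rw [Subgroup.index_map_eq _ (QuotientGroup.mk'_surjective _)
      (by rwa [QuotientGroup.ker_mk'])]
    exact hKfi.index_ne_zero
  · rintro ⟨k, hk, he⟩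
    apply hfK
    have h2 : k⁻¹ * f ∈ conjAut G := QuotientGroup.eq.mp he
    have h3 : f ∈ K := by
      have h4 := mul_mem hk (hle h2)
      simpa using h4
    exact h3
end

section
/- Let G be a finitely generated, conjugacy separable group, and let f be an automorphism of G such that for every characteristic subgroup K of finite index in G and every g ∈ G, the images of f(g) and g are conjugate in the quotient G/K. Then f is a conjugating automorphism of G, i.e., f(g) is conjugate to g in G for every g ∈ G. -/
/-- Conjugation of permutations along an equivalence, as a `MulEquiv`. -/
def permCongrMulEquiv {α β : Type*} (e : α ≃ β) : Equiv.Perm α ≃* Equiv.Perm β :=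
  { e.permCongr with
    map_mul' := by
      intro p q
      ext x
      simp [Equiv.permCongr_apply, Equiv.Perm.mul_apply] }

/-- A finitely generated group has finitely many homomorphisms into a finite monoid. -/
lemma finite_monoidHom_of_fg {G M : Type*} [Group G] [Monoid M] [Finite M]
    (hfg : Group.FG G) : Finite (G →* M) := by
  obtain ⟨S, hS⟩ := hfg
  refine Finite.of_injective (fun φ => (fun s : S => φ s)) ?_
  intro φ ψ hφψ
  refine MonoidHom.eq_of_eqOn_dense hS ?_
  intro x hx
  exact congrFun hφψ ⟨x, hx⟩

/-- In a finitely generated group there are finitely many subgroups of a given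
(nonzero) index. -/
lemma finite_subgroups_of_index {G : Type*} [Group G] (hfg : Group.FG G) {n : ℕ} (hn : n ≠ 0) :
    {H : Subgroup G | H.index = n}.Finite := by
  rw [← Set.finite_coe_iff]
  have : Finite (G →* Equiv.Perm (Fin n)) := finite_monoidHom_of_fg hfg
  have key : ∀ H : {H : Subgroup G // H.index = n}, Nat.card (G ⧸ H.1) ≠ 0 := by
    intro H
    rw [← Subgroup.index, H.2]; exact hn
  -- choose an equivalence `G ⧸ H ≃ Fin n` for each `H`
  have eH : ∀ H : {H : Subgroup G // H.index = n}, (G ⧸ H.1) ≃ Fin n := by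
    intro H
    have e := Nat.equivFinOfCardPos (key H)
    rwa [← Subgroup.index, H.2] at e
  refine Finite.of_injective
    (fun H : {H : Subgroup G // H.index = n} =>
      (((permCongrMulEquiv (eH H)).toMonoidHom.comp (MulAction.toPermHom G (G ⧸ H.1))),
        eH H ((1 : G) : G ⧸ H.1))) ?_
  intro H₁ H₂ hH
  have h1 := congrArg Prod.fst hH
  have h2 := congrArg Prod.snd hH
  simp only at h1 h2
  have mem_iff : ∀ (H : {H : Subgroup G // H.index = n}) (g : G),
      g ∈ H.1 ↔
      ((permCongrMulEquiv (eH H)).toMonoidHom.comp (MulAction.toPermHom G (G ⧸ H.1))) g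
        (eH H ((1 : G) : G ⧸ H.1)) = eH H ((1 : G) : G ⧸ H.1) := by
    intro H g
    simp only [MonoidHom.comp_apply, MulEquiv.coe_toMonoidHom, permCongrMulEquiv,
      MulEquiv.coe_mk, Equiv.permCongr_apply, Equiv.symm_apply_apply,
      MulAction.toPermHom_apply, MulAction.toPerm_apply]
    rw [Equiv.apply_eq_iff_eq, MulAction.Quotient.smul_mk,
      QuotientGroup.eq]
    simp
  ext g
  rw [mem_iff H₁ g, mem_iff H₂ g, h1, h2]

/-- If `G` is finitely generated and conjugacy separable and `f` is an automorphism such that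
`f g` and `g` are conjugate modulo every finite-index characteristic subgroup, then `f` is a
conjugating automorphism. -/
theorem conjugating_of_isConj_mod_characteristic (G : Type*) [Group G]
    (hfg : Group.FG G) (hcs : ConjugacySeparable G) (f : MulAut G)
    (h : ∀ (K : Subgroup G) [K.Characteristic] [K.FiniteIndex] (g : G),
      IsConj (QuotientGroup.mk (f g) : G ⧸ K) (QuotientGroup.mk g)) :
    ∀ g : G, IsConj (f g) g := by
  intro g
  apply hcs
  intro N _ _
  have hn0 : N.index ≠ 0 := Subgroup.FiniteIndex.index_ne_zero
  set S : Set (Subgroup G) := {H : Subgroup G | H.index = N.index} with hS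
  haveI hfinS : Finite S := (finite_subgroups_of_index hfg hn0).to_subtype
  set K : Subgroup G := sInf S with hK
  have hidx : ∀ H : S, H.1.FiniteIndex := fun H => ⟨by
    have hh : H.1.index = N.index := H.2
    rw [hh]; exact hn0⟩
  haveI hKfi : K.FiniteIndex := by
    rw [hK, sInf_eq_iInf']
    exact Subgroup.finiteIndex_iInf fun H => hidx H
  have himg : ∀ ϕ : G ≃* G, Subgroup.comap ϕ.toMonoidHom '' S = S := by
    intro ϕ
    ext H
    simp only [Set.mem_image, hS, Set.mem_setOf_eq]
    constructor
    · rintro ⟨H', hH', rfl⟩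
      rw [Subgroup.index_comap_of_surjective _ ϕ.surjective]; exact hH'
    · intro hH
      refine ⟨Subgroup.comap ϕ.symm.toMonoidHom H, ?_, ?_⟩
      · rw [Subgroup.index_comap_of_surjective _ ϕ.symm.surjective]; exact hH
      · rw [Subgroup.comap_comap]
        convert Subgroup.comap_id H using 2
        ext x
        simp
  haveI hKchar : K.Characteristic := by
    refine Subgroup.characteristic_iff_comap_eq.mpr fun ϕ => ?_
    conv_lhs => rw [hK, sInf_eq_iInf', Subgroup.comap_iInf]
    rw [← sInf_image', himg ϕ, hK]
  have hKle : K ≤ N := sInf_le (by rw [hS]; exact Set.mem_setOf_eq ▸ rfl)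
  have hconj := h K g
  have hmap := (QuotientGroup.map K N (MonoidHom.id G)
    (fun x hx => by simpa using hKle hx)).map_isConj hconj
  simpa [QuotientGroup.map_mk] using hmap
end

section
/- Let G be a finitely generated group containing a normal subgroup N of finite index whose center is trivial. If Out(N) is virtually torsion-free, then Out(G) is virtually torsion-free. -/
/-!
As `G` is finitely generated and `G ⧸ N` is finite, there are only finitely many homomorphisms
`G → Perm (G ⧸ N)`; precomposition permutes them, so the automorphisms fixing every coset of `N`
form a finite-index subgroup `A₀ ≤ Aut(G)`. They preserve `N`, which gives a restriction map
`A₀ → Aut(N)`. It is injective because `N` has trivial center: if `ψ ∈ A₀` is the identity on `N`,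
then `x⁻¹ ψ(x)` lies in `N` and centralizes it. So `φ ∈ A₀` is inner once its restriction is.
If `φ^k = conj g`, then `φ^(k m) = conj (g^m)` with `g^m ∈ N` for `m = [G : N]`, so torsion in
`Out(G)` restricts to torsion in `Out(N)`. Hence the image in `Out(G)` of the preimage of a
torsion-free finite-index subgroup of `Out(N)` is torsion-free of finite index.
-/

/-- The subgroup `Inn(G) ≤ Aut(G)` of inner automorphisms. -/
abbrev innAut (G : Type*) [Group G] : Subgroup (MulAut G) :=
  (MulAut.conj : G →* MulAut G).range

instance innAut_normal (G : Type*) [Group G] : (innAut G).Normal := by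
  constructor
  rintro - ⟨g, rfl⟩ f
  refine ⟨f g, ?_⟩
  ext x
  simp [MulAut.conj_apply, map_mul, map_inv, mul_assoc]

/-- The outer automorphism group `Out(G) = Aut(G)/Inn(G)`. -/
abbrev OutAut (G : Type*) [Group G] := MulAut G ⧸ innAut G

/-- A monoid is torsion-free if every non-identity element has infinite order
(the definition of `Monoid.IsTorsionFree` in the older Mathlib). -/
def Monoid.IsTorsionFree (G : Type*) [Monoid G] : Prop :=
  ∀ g : G, g ≠ 1 → ¬IsOfFinOrder g

/-- A group is virtually torsion-free if it has a torsion-free subgroup of finite index. -/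
def VirtuallyTorsionFree (G : Type*) [Group G] : Prop :=
  ∃ H : Subgroup G, H.FiniteIndex ∧ Monoid.IsTorsionFree H

open Function

theorem finite_monoidHom_of_fg_s8 (M H : Type*) [Monoid M] [Monoid H] [Monoid.FG M] [Finite H] :
    Finite (M →* H) := by
  obtain ⟨S, hS, hSfin⟩ := Monoid.fg_iff.mp ‹Monoid.FG M›
  have := hSfin.to_subtype
  refine Finite.of_injective (fun f : M →* H => S.domRestrict f) fun f g hfg => ?_
  exact MonoidHom.eq_of_eqOn_denseM hS fun x hx => congrFun hfg ⟨x, hx⟩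

theorem VirtuallyTorsionFree.of_monoidHom {C B Q : Type*} [Group C] [Group B] [Group Q]
    (f : C →* B) (σ : C →* Q) (hf : f.range.FiniteIndex) (hσ : σ.ker ≤ f.ker)
    (htors : ∀ c, IsOfFinOrder (f c) → IsOfFinOrder (σ c)) (hQ : VirtuallyTorsionFree Q) :
    VirtuallyTorsionFree B := by
  obtain ⟨T, hT, hTtf⟩ := hQ
  refine ⟨(T.comap σ).map f, ⟨?_⟩, ?_⟩
  · have : (T.comap σ).FiniteIndex := ⟨by
      rw [Subgroup.index_comap]
      exact Subgroup.isFiniteRelIndex_of_finiteIndex.relIndex_ne_zero⟩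
    have : (T.comap σ ⊔ f.ker).FiniteIndex := Subgroup.finiteIndex_of_le le_sup_left
    rw [Subgroup.index_map]
    exact mul_ne_zero Subgroup.FiniteIndex.index_ne_zero hf.index_ne_zero
  · rintro ⟨-, c, hcT, rfl⟩ hne hfin
    have hσc : IsOfFinOrder (⟨σ c, hcT⟩ : T) :=
      Submonoid.isOfFinOrder_coe.mp (htors c (Submonoid.isOfFinOrder_coe.mpr hfin))
    have hσ1 : σ c = 1 := by
      by_contra hne'
      exact hTtf _ (fun h => hne' (congrArg Subtype.val h)) hσc
    exact hne (Subtype.ext (hσ hσ1))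

namespace MulAut

variable {G : Type*} [Group G] (N : Subgroup G)

def fixingCosets : Subgroup (MulAut G) where
  carrier := {φ | ∀ g : G, (φ g : G ⧸ N) = g}
  one_mem' _ := rfl
  mul_mem' {_ ψ} hφ hψ g := (hφ (ψ g)).trans (hψ g)
  inv_mem' {φ} hφ g := by simpa using (hφ (φ⁻¹ g)).symm

def precompPerm (H : Type*) [Monoid H] : MulAut G →* Equiv.Perm (G →* H) where
  toFun φ := MulEquiv.monoidHomCongrLeftEquiv φ
  map_one' := MulEquiv.monoidHomCongrLeftEquiv_refl
  map_mul' φ ψ := MulEquiv.monoidHomCongrLeftEquiv_trans ψ φ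

theorem ker_precompPerm_le_fixingCosets :
    (precompPerm (Equiv.Perm (G ⧸ N))).ker ≤ fixingCosets N := by
  intro φ hφ g
  have := congrArg (fun e => e (MulAction.toPermHom G (G ⧸ N)) (φ g) (1 : G)) hφ
  simpa [precompPerm] using this.symm

theorem fixingCosets_finiteIndex [Group.FG G] [N.FiniteIndex] : (fixingCosets N).FiniteIndex := by
  have := finite_monoidHom_of_fg_s8 G (Equiv.Perm (G ⧸ N))
  exact Subgroup.finiteIndex_of_le (ker_precompPerm_le_fixingCosets N)

variable {N}

theorem apply_mem_of_mem_fixingCosets {φ : MulAut G} (hφ : φ ∈ fixingCosets N) {x : G}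
    (hx : x ∈ N) : φ x ∈ N := by
  have := hφ x
  rw [QuotientGroup.eq] at this
  simpa using N.mul_mem hx (N.inv_mem this)

variable (N)

def restrict : fixingCosets N →* MulAut N where
  toFun φ :=
    { toFun x := ⟨φ.1 x, apply_mem_of_mem_fixingCosets φ.2 x.2⟩
      invFun x := ⟨φ.1⁻¹ (x : G), apply_mem_of_mem_fixingCosets (inv_mem φ.2) x.2⟩
      left_inv x := Subtype.ext (MulAut.inv_apply_self G φ.1 x)
      right_inv x := Subtype.ext (MulAut.apply_inv_self G φ.1 x)
      map_mul' x y := Subtype.ext (map_mul φ.1 (x : G) y) }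
  map_one' := rfl
  map_mul' _ _ := rfl

variable {N} [N.Normal]

theorem conj_mem_fixingCosets {n : G} (hn : n ∈ N) : conj n ∈ fixingCosets N := by
  intro g
  rw [QuotientGroup.eq, conj_apply,
    show (n * g * n⁻¹)⁻¹ * g = n * (g⁻¹ * n⁻¹ * g⁻¹⁻¹) by group]
  exact N.mul_mem hn (‹N.Normal›.conj_mem _ (N.inv_mem hn) g⁻¹)

theorem restrict_conj (n : N) : restrict N ⟨conj (n : G), conj_mem_fixingCosets n.2⟩ = conj n :=
  rfl

theorem eq_one_of_mem_fixingCosets_of_eqOn (hZ : Subgroup.center N = ⊥) {ψ : MulAut G}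
    (hψ : ψ ∈ fixingCosets N) (hfix : ∀ y ∈ N, ψ y = y) : ψ = 1 := by
  ext x
  have hw : x⁻¹ * ψ x ∈ N := QuotientGroup.eq.mp (hψ x).symm
  have hcomm (y : G) (hy : y ∈ N) : y * (x⁻¹ * ψ x) = x⁻¹ * ψ x * y := by
    have hconj : ψ x * y * (ψ x)⁻¹ = x * y * x⁻¹ := by
      rw [← hfix _ (‹N.Normal›.conj_mem y hy x), map_mul, map_mul, map_inv, hfix y hy]
    calc y * (x⁻¹ * ψ x) = x⁻¹ * (x * y * x⁻¹) * ψ x := by group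
      _ = x⁻¹ * (ψ x * y * (ψ x)⁻¹) * ψ x := by rw [hconj]
      _ = x⁻¹ * ψ x * y := by group
  have hcenter : (⟨x⁻¹ * ψ x, hw⟩ : N) ∈ Subgroup.center N :=
    Subgroup.mem_center_iff.mpr fun y => Subtype.ext (hcomm y y.2)
  rw [hZ, Subgroup.mem_bot, Subgroup.mk_eq_one] at hcenter
  exact (inv_mul_eq_one.mp hcenter).symm

theorem restrict_injective (hZ : Subgroup.center N = ⊥) : Injective (restrict N) := by
  refine (injective_iff_map_eq_one _).mpr fun ψ hψ => Subtype.ext ?_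
  exact eq_one_of_mem_fixingCosets_of_eqOn hZ ψ.2 fun y hy =>
    congrArg Subtype.val (DFunLike.congr_fun hψ (⟨y, hy⟩ : N))

theorem eq_one_of_restrict_eq_one (hZ : Subgroup.center N = ⊥) {φ : fixingCosets N}
    (h : (restrict N φ : OutAut N) = 1) : (φ.1 : OutAut G) = 1 := by
  rw [QuotientGroup.eq_one_iff] at h ⊢
  obtain ⟨n, hn⟩ := h
  rw [← restrict_conj] at hn
  exact ⟨n, congrArg Subtype.val (restrict_injective hZ hn)⟩

theorem isOfFinOrder_restrict_of_isOfFinOrder [N.FiniteIndex] {φ : fixingCosets N}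
    (h : IsOfFinOrder (φ.1 : OutAut G)) : IsOfFinOrder (restrict N φ : OutAut N) := by
  obtain ⟨k, hk, hpow⟩ := isOfFinOrder_iff_pow_eq_one.mp h
  rw [← QuotientGroup.mk_pow, QuotientGroup.eq_one_iff] at hpow
  obtain ⟨g, hg⟩ := hpow
  let n : N := ⟨g ^ N.index, N.pow_index_mem g⟩
  have hφ : φ ^ (k * N.index) = ⟨conj (n : G), conj_mem_fixingCosets n.2⟩ := by
    ext1
    rw [Subgroup.coe_pow, pow_mul, ← hg, ← map_pow]
  refine isOfFinOrder_iff_pow_eq_one.mpr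
    ⟨k * N.index, Nat.mul_pos hk (Nat.pos_of_ne_zero Subgroup.FiniteIndex.index_ne_zero), ?_⟩
  rw [← QuotientGroup.mk_pow, ← map_pow, hφ, restrict_conj, QuotientGroup.eq_one_iff]
  exact ⟨_, rfl⟩

end MulAut

/-- If a finitely generated group `G` has a finite-index normal subgroup `N` with trivial
center and `Out(N)` is virtually torsion-free, then `Out(G)` is virtually torsion-free. -/
theorem virtuallyTorsionFree_out_of_normal (G : Type*) [Group G] (hfg : Group.FG G)
    (N : Subgroup G) [N.Normal] (hfin : N.FiniteIndex)
    (hZ : Subgroup.center ↥N = ⊥)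
    (hout : VirtuallyTorsionFree (OutAut ↥N)) :
    VirtuallyTorsionFree (OutAut G) := by
  have := MulAut.fixingCosets_finiteIndex N
  refine .of_monoidHom ((QuotientGroup.mk' (innAut G)).comp (MulAut.fixingCosets N).subtype)
    ((QuotientGroup.mk' (innAut N)).comp (MulAut.restrict N)) ⟨?_⟩
    (fun _ => MulAut.eq_one_of_restrict_eq_one hZ)
    (fun _ => MulAut.isOfFinOrder_restrict_of_isOfFinOrder) hout
  rw [MonoidHom.range_comp, Subgroup.range_subtype]
  exact ne_zero_of_dvd_ne_zero Subgroup.FiniteIndex.index_ne_zero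
    (Subgroup.index_map_dvd _ (QuotientGroup.mk'_surjective _))
end

section
/- Let G be a group and N a normal subgroup of G with trivial center. Let Aut_N(G) denote the subgroup of Aut(G) consisting of automorphisms f with f(N) = N that induce the identity on G/N, and let Inn_N(G) denote the subgroup of Inn(G) consisting of conjugations by elements of N. Then Inn_N(G) is normal in Aut_N(G), the restriction map carries Inn_N(G) onto Inn(N), and the quotient Aut_N(G)/Inn_N(G) embeds into Out(N). -/
/-- `Aut_N(G)`: the subgroup of `Aut(G)` of automorphisms `f` with `f(N) = N` which induce
the identity automorphism on `G/N`, i.e. `f g * g⁻¹ ∈ N` for all `g`. -/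
def autRelN {G : Type*} [Group G] (N : Subgroup G) : Subgroup (MulAut G) where
  carrier := {f | (∀ n ∈ N, f n ∈ N) ∧ ∀ g : G, f g * g⁻¹ ∈ N}
  one_mem' := ⟨fun n hn => by simpa using hn, fun g => by simpa using N.one_mem⟩
  mul_mem' := by
    intro a b ha hb
    refine ⟨fun n hn => ha.1 _ (hb.1 n hn), fun g => ?_⟩
    have h := mul_mem (ha.2 (b g)) (hb.2 g)
    simpa [mul_assoc] using h
  inv_mem' := by
    intro a ha
    constructor
    · intro n hn
      have h2 : n * (a⁻¹ n)⁻¹ ∈ N := by simpa using ha.2 (a⁻¹ n)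
      have h3 := mul_mem (inv_mem h2) hn
      simpa [mul_assoc] using h3
    · intro g
      have h := inv_mem (ha.2 (a⁻¹ g))
      simpa [mul_assoc] using h

/-- `Inn_N(G)`: the subgroup of inner automorphisms of `G` given by conjugation by
elements of `N`. -/
abbrev innRelN {G : Type*} [Group G] (N : Subgroup G) : Subgroup (MulAut G) :=
  N.map (MulAut.conj : G →* MulAut G)

instance innRelN_normal {G : Type*} [Group G] (N : Subgroup G) [N.Normal] :
    ((innRelN N).subgroupOf (autRelN N)).Normal := by
  constructor
  intro c hc f
  rw [Subgroup.mem_subgroupOf] at hc ⊢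
  obtain ⟨n, hn, hcn⟩ := hc
  have hfn : (f : MulAut G) n ∈ N := (f.2).1 n hn
  refine ⟨(f : MulAut G) n, hfn, ?_⟩
  have h : ((f * c * f⁻¹ : ↥(autRelN N)) : MulAut G)
      = (f : MulAut G) * (c : MulAut G) * (f : MulAut G)⁻¹ := rfl
  rw [h, ← hcn]
  ext x
  simp [MulAut.conj_apply, map_mul, map_inv, mul_assoc]

/-!
Restriction to `N` maps `Aut_N(G)` to `Aut(N)` and conjugation by `n ∈ N` in `G` to conjugation
by `n` in `N`. When `Z(N) = 1` this restriction is injective: if `f` fixes `N` pointwise, then for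
`m ∈ N` we get `f(g)⁻¹ m f(g) = f(g⁻¹ m g) = g⁻¹ m g`, so `f(g) g⁻¹ ∈ N` is central in `N`, hence
trivial. Consequently the preimage of `Inn(N)` is exactly `Inn_N(G)`, which is therefore the
kernel of `Aut_N(G) → Out(N)`.
-/

theorem commute_apply_mul_inv_of_forall_mem_eq {G : Type*} [Group G] {N : Subgroup G}
    [hN : N.Normal] {f : MulAut G} (hf : ∀ n ∈ N, f n = n) (g : G) {m : G} (hm : m ∈ N) :
    Commute (f g * g⁻¹) m := by
  have hfix : (f g)⁻¹ * m * f g = g⁻¹ * m * g := by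
    have h := hf _ (by simpa using hN.conj_mem m hm g⁻¹)
    rwa [map_mul, map_mul, map_inv, hf m hm] at h
  calc f g * g⁻¹ * m = f g * (g⁻¹ * m * g) * g⁻¹ := by group
    _ = f g * ((f g)⁻¹ * m * f g) * g⁻¹ := by rw [hfix]
    _ = m * (f g * g⁻¹) := by group

namespace autRelN

variable {G : Type*} [Group G] (N : Subgroup G)

theorem mem_iff {f : MulAut G} :
    f ∈ autRelN N ↔ (∀ n ∈ N, f n ∈ N) ∧ ∀ g, f g * g⁻¹ ∈ N := Iff.rfl

theorem conj_mem [hN : N.Normal] {n : G} (hn : n ∈ N) : MulAut.conj n ∈ autRelN N := by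
  refine ⟨fun m hm => hN.conj_mem m hm n, fun g => ?_⟩
  simpa [mul_assoc] using mul_mem hn (hN.conj_mem _ (inv_mem hn) g)

theorem innRelN_le [N.Normal] : innRelN N ≤ autRelN N := by
  rintro - ⟨n, hn, rfl⟩
  exact conj_mem N hn

def conjHom [N.Normal] : N →* autRelN N :=
  (MulAut.conj.comp N.subtype).codRestrict _ fun n => conj_mem N n.2

theorem range_conjHom [N.Normal] :
    (conjHom N).range = (innRelN N).subgroupOf (autRelN N) := by
  ext f
  simp [conjHom, Subgroup.mem_subgroupOf, Subtype.ext_iff]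

def restrict : autRelN N →* MulAut N where
  toFun f :=
    { toFun := fun n => ⟨(f : MulAut G) n, f.2.1 n n.2⟩
      invFun := fun n => ⟨(f : MulAut G)⁻¹ n, (f⁻¹).2.1 n n.2⟩
      left_inv := fun n => by ext; simp
      right_inv := fun n => by ext; simp
      map_mul' := fun _ _ => by ext; simp }
  map_one' := rfl
  map_mul' _ _ := rfl

@[simp]
theorem coe_restrict_apply (f : autRelN N) (n : N) : (restrict N f n : G) = (f : MulAut G) n := rfl

theorem restrict_comp_conjHom [N.Normal] : (restrict N).comp (conjHom N) = MulAut.conj := rfl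

theorem map_restrict_innRelN [N.Normal] :
    ((innRelN N).subgroupOf (autRelN N)).map (restrict N) = innAut N := by
  rw [← range_conjHom, MonoidHom.map_range, restrict_comp_conjHom]

variable {N}

theorem eq_one_of_forall_mem_eq [N.Normal] (hZ : Subgroup.center N = ⊥) {f : autRelN N}
    (hf : ∀ n ∈ N, (f : MulAut G) n = n) : f = 1 := by
  ext g
  have hcen : (⟨(f : MulAut G) g * g⁻¹, ((mem_iff N).mp f.2).2 g⟩ : N) ∈ Subgroup.center N :=
    Subgroup.mem_center_iff.mpr fun m =>
      Subtype.ext (commute_apply_mul_inv_of_forall_mem_eq hf g m.2).symm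
  rw [hZ, Subgroup.mem_bot, Subgroup.mk_eq_one, mul_inv_eq_one] at hcen
  exact hcen

theorem restrict_injective [N.Normal] (hZ : Subgroup.center N = ⊥) :
    Function.Injective (restrict N) := by
  refine (injective_iff_map_eq_one _).mpr fun f hf => eq_one_of_forall_mem_eq hZ fun n hn => ?_
  simpa using congrArg (fun φ : MulAut N => (φ ⟨n, hn⟩ : G)) hf

variable (N)

def toOut : autRelN N →* OutAut N :=
  (QuotientGroup.mk' (innAut N)).comp (restrict N)

theorem ker_toOut [N.Normal] (hZ : Subgroup.center N = ⊥) :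
    (toOut N).ker = (innRelN N).subgroupOf (autRelN N) := by
  rw [toOut, ← MonoidHom.comap_ker, QuotientGroup.ker_mk', ← map_restrict_innRelN,
    Subgroup.comap_map_eq_self_of_injective (restrict_injective hZ)]

end autRelN

/-- If `N ⊴ G` has trivial center, then `Inn_N(G)` is normal in `Aut_N(G)`, the restriction
map carries `Inn_N(G)` onto `Inn(N)`, and `Aut_N(G)/Inn_N(G)` embeds into `Out(N)`. -/
theorem autRelN_mod_innRelN_embeds_out (G : Type*) [Group G] (N : Subgroup G) [N.Normal]
    (hZ : Subgroup.center ↥N = ⊥) :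
    innRelN N ≤ autRelN N ∧
    ((innRelN N).subgroupOf (autRelN N)).Normal ∧
    ∃ φ : ↥(autRelN N) →* MulAut ↥N,
      (∀ (f : ↥(autRelN N)) (n : ↥N), ((φ f) n : G) = (f : MulAut G) (n : G)) ∧
      Subgroup.map φ ((innRelN N).subgroupOf (autRelN N)) = innAut ↥N ∧
      ∃ ψ : (↥(autRelN N) ⧸ (innRelN N).subgroupOf (autRelN N)) →* OutAut ↥N,
        (∀ f : ↥(autRelN N),
          ψ (QuotientGroup.mk f) = QuotientGroup.mk (φ f)) ∧
        Function.Injective ψ := by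
  have hker := autRelN.ker_toOut N hZ
  refine ⟨autRelN.innRelN_le N, inferInstance, autRelN.restrict N, fun _ _ => rfl,
    autRelN.map_restrict_innRelN N, QuotientGroup.lift _ _ hker.ge, fun _ => rfl, ?_⟩
  exact (QuotientGroup.injective_lift_iff _ _ _).mpr hker.symm
end

section
/- Let G be a group and N a normal subgroup of finite index in G with trivial center. Let Aut_N(G) be the subgroup of Aut(G) of automorphisms preserving N and inducing the identity on G/N, and Inn_N(G) the conjugations by elements of N. Then the natural map Aut_N(G)/Inn_N(G) → Out(G) induced by the projection Aut(G) → Out(G) has finite kernel, equal to Inn(G)/Inn_N(G). -/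
/-- If `N ⊴ G` has finite index and trivial center, then the natural map
`Aut_N(G)/Inn_N(G) → Out(G)` has finite kernel, equal to `Inn(G)/Inn_N(G)`. -/
theorem natural_map_to_out_finite_kernel (G : Type*) [Group G] (N : Subgroup G) [N.Normal]
    (hfin : N.FiniteIndex) (hZ : Subgroup.center ↥N = ⊥) :
    ∃ π : (↥(autRelN N) ⧸ (innRelN N).subgroupOf (autRelN N)) →* OutAut G,
      (∀ f : ↥(autRelN N),
        π (QuotientGroup.mk f) = QuotientGroup.mk (f : MulAut G)) ∧
      Finite π.ker ∧
      π.ker = Subgroup.map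
        (QuotientGroup.mk' ((innRelN N).subgroupOf (autRelN N)))
        ((innAut G).subgroupOf (autRelN N)) := by
  classical
  set S : Subgroup ↥(autRelN N) := (innAut G).subgroupOf (autRelN N) with hS
  set I : Subgroup ↥(autRelN N) := (innRelN N).subgroupOf (autRelN N) with hI
  have hIS : I ≤ S := by
    intro f hf
    rw [hI, Subgroup.mem_subgroupOf] at hf
    obtain ⟨n, _, hn⟩ := hf
    exact Subgroup.mem_subgroupOf.2 ⟨n, hn⟩
  -- the hom from autRelN to Out(G)
  let φ : ↥(autRelN N) →* OutAut G :=
    (QuotientGroup.mk' (innAut G)).comp (autRelN N).subtype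
  have hφker : I ≤ φ.ker := by
    intro f hf
    have hf' : (f : MulAut G) ∈ innAut G := hIS hf
    simpa [φ, MonoidHom.mem_ker, QuotientGroup.eq_one_iff] using hf'
  refine ⟨QuotientGroup.lift I φ hφker, fun f => rfl, ?_, ?_⟩
  · -- finiteness
    set π := QuotientGroup.lift I φ hφker with hπ
    set K : Subgroup G := N ⊔ Subgroup.center G with hK
    haveI : K.FiniteIndex := Subgroup.finiteIndex_of_le le_sup_left
    have hker : ∀ x : ↥(autRelN N) ⧸ I, π x = 1 → ∃ g : G,
        ∃ hg : MulAut.conj g ∈ autRelN N,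
        QuotientGroup.mk (⟨MulAut.conj g, hg⟩ : ↥(autRelN N)) = x := by
      intro x hx
      induction x using QuotientGroup.induction_on with
      | H f =>
        have h1 : φ f = 1 := hx
        have hf : (f : MulAut G) ∈ innAut G := by
          simpa [φ, QuotientGroup.eq_one_iff] using h1
        obtain ⟨g, hg⟩ := hf
        have hg' : MulAut.conj g ∈ autRelN N := hg ▸ f.2
        exact ⟨g, hg', by congr 1; exact Subtype.ext hg⟩
    choose rep hrep hmk using fun x : π.ker => hker x.1 x.2
    refine Finite.of_injective (fun x : π.ker => (QuotientGroup.mk (rep x) : G ⧸ K)) ?_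
    intro x y hxy
    have hxy' : (rep x)⁻¹ * rep y ∈ K := QuotientGroup.eq.mp hxy
    rw [hK, sup_comm, ← SetLike.mem_coe, Subgroup.mul_normal] at hxy'
    obtain ⟨z, hz, n, hn, hzn⟩ := hxy'
    have hz1 : MulAut.conj z = 1 := by
      ext w
      have := (Subgroup.mem_center_iff.mp hz) w
      simp only [MulAut.conj_apply, MulAut.one_apply]
      rw [← this, mul_assoc, mul_inv_cancel, mul_one]
    have hzn' : z * n = (rep x)⁻¹ * rep y := hzn
    have hrepy : rep y = rep x * z * n := by
      rw [mul_assoc, hzn', ← mul_assoc, mul_inv_cancel, one_mul]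
    have hconj : MulAut.conj (rep y) = MulAut.conj (rep x) * MulAut.conj n := by
      rw [hrepy, map_mul, map_mul, hz1, mul_one]
    have hIxy : (⟨MulAut.conj (rep x), hrep x⟩ : ↥(autRelN N))⁻¹
        * ⟨MulAut.conj (rep y), hrep y⟩ ∈ I := by
      rw [hI, Subgroup.mem_subgroupOf]
      refine ⟨n, hn, ?_⟩
      show MulAut.conj n = (MulAut.conj (rep x))⁻¹ * MulAut.conj (rep y)
      rw [hconj, ← mul_assoc, inv_mul_cancel, one_mul]
    have hmkeq : (QuotientGroup.mk (⟨MulAut.conj (rep x), hrep x⟩ : ↥(autRelN N))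
        : ↥(autRelN N) ⧸ I)
        = QuotientGroup.mk (⟨MulAut.conj (rep y), hrep y⟩ : ↥(autRelN N)) :=
      QuotientGroup.eq.mpr hIxy
    exact Subtype.ext ((hmk x).symm.trans (hmkeq.trans (hmk y)))
  · -- kernel identification
    ext x
    induction x using QuotientGroup.induction_on with
    | H f =>
      simp only [MonoidHom.mem_ker]
      constructor
      · intro h
        have hf : (f : MulAut G) ∈ innAut G := by
          have : φ f = 1 := h
          simpa [φ, QuotientGroup.eq_one_iff] using this
        exact ⟨f, Subgroup.mem_subgroupOf.2 hf, rfl⟩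
      · rintro ⟨s, hs, hsf⟩
        have hs' : (s : MulAut G) ∈ innAut G := Subgroup.mem_subgroupOf.1 hs
        have : s⁻¹ * f ∈ I := QuotientGroup.eq.mp hsf
        have hf : (f : MulAut G) ∈ innAut G := by
          have := mul_mem hs' (hIS this)
          simpa using this
        show φ f = 1
        simpa [φ, QuotientGroup.eq_one_iff] using hf
end

section
/- The outer automorphism group of a virtually cyclic group is finite. -/
/-!
Let `N` be a normal cyclic subgroup of finite index `n` (the normal core of `H`). The subgroup
`M` generated by all `n`-th powers lies in `N` and contains the `n`-th powers of `N`, so it is a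
characteristic cyclic subgroup of finite index; when `G` is infinite, `M` is infinite cyclic.

The automorphisms acting trivially on `M` and on `Q = G ⧸ M` form a subgroup `B` of finite index
in `Aut G`, since the rest of an automorphism is an automorphism of `M` and one of `Q`. For
`f ∈ B`, the deviation `g ↦ g⁻¹ f(g)` is an `M`-valued crossed homomorphism on `Q`; averaging
it over `Q` (the usual argument that `|Q|` kills `H¹(Q, M)`) shows that `f ^ |Q|` is
conjugation by an element of `M`. The average is an injective homomorphism `B → M` because `M`
is torsion-free, so `B` is cyclic, and its image in `Out G` is cyclic of exponent dividing
`|Q|`, hence finite.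
-/

open Subgroup

namespace Subgroup

variable {G : Type*} [Group G]

instance characteristic_closure_range_pow (n : ℕ) :
    (closure (Set.range fun g : G => g ^ n)).Characteristic := by
  refine characteristic_iff_map_le.2 fun φ => ?_
  rw [MonoidHom.map_closure]
  refine closure_mono ?_
  rintro _ ⟨_, ⟨g, rfl⟩, rfl⟩
  exact ⟨φ g, (map_pow φ g n).symm⟩

theorem closure_range_pow_index_le (N : Subgroup G) [N.Normal] :
    closure (Set.range fun g : G => g ^ N.index) ≤ N :=
  (closure_le N).2 (Set.range_subset_iff.2 N.pow_index_mem)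

theorem finiteIndex_of_finite_quotient_subgroupOf {H K : Subgroup G} [K.FiniteIndex]
    [Finite (K ⧸ H.subgroupOf K)] : H.FiniteIndex := by
  rw [finiteIndex_iff, ← relIndex_top_right]
  exact relIndex_ne_zero_trans (index_ne_zero_of_finite (H := H.subgroupOf K))
    (by rw [relIndex_top_right]; exact FiniteIndex.index_ne_zero)

end Subgroup

theorem IsCyclic.finite_of_pow_eq_one {X : Type*} [Group X] [IsCyclic X] {n : ℕ} (hn : n ≠ 0)
    (h : ∀ x : X, x ^ n = 1) : Finite X := by
  refine Nat.finite_of_card_ne_zero ?_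
  rw [← IsCyclic.exponent_eq_card]
  exact ne_zero_of_dvd_ne_zero hn (Monoid.exponent_dvd_of_forall_pow_eq_one h)

instance IsCyclic.isMulTorsionFree_of_infinite {X : Type*} [Group X] [IsCyclic X] [Infinite X] :
    IsMulTorsionFree X := by
  obtain ⟨g, hg⟩ := IsCyclic.exists_generator (α := X)
  have hinj : Function.Injective fun k : ℤ => g ^ k :=
    injective_zpow_iff_not_isOfFinOrder.2 <| orderOf_eq_zero_iff.1 <|
      Infinite.orderOf_eq_zero_of_forall_mem_zpowers hg
  refine ⟨fun n hn a b hab => ?_⟩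
  obtain ⟨i, rfl⟩ := mem_zpowers_iff.1 (hg a)
  obtain ⟨j, rfl⟩ := mem_zpowers_iff.1 (hg b)
  simp only [← zpow_natCast, ← zpow_mul] at hab
  rw [Int.eq_of_mul_eq_mul_right (Int.natCast_ne_zero.2 hn) (hinj hab)]

instance IsCyclic.finite_mulAut {X : Type*} [Group X] [IsCyclic X] : Finite (MulAut X) :=
  Finite.of_equiv _ (IsCyclic.mulAutMulEquiv X).symm.toEquiv

theorem exists_characteristic_isCyclic_finiteIndex {G : Type*} [Group G] (H : Subgroup G)
    [IsCyclic H] [H.FiniteIndex] :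
    ∃ M : Subgroup G, M.Characteristic ∧ IsCyclic M ∧ M.FiniteIndex := by
  set N := H.normalCore
  set M := closure (Set.range fun g : G => g ^ N.index)
  have hMN : M ≤ N := N.closure_range_pow_index_le
  have : IsCyclic N := isCyclic_of_le H.normalCore_le
  have : (M.subgroupOf N).Normal := normal_of_isMulCommutative _
  have : IsCyclic (N ⧸ M.subgroupOf N) :=
    isCyclic_of_surjective _ (QuotientGroup.mk'_surjective (M.subgroupOf N))
  have : Finite (N ⧸ M.subgroupOf N) := by
    refine IsCyclic.finite_of_pow_eq_one (FiniteIndex.index_ne_zero (H := N)) ?_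
    refine QuotientGroup.mk_surjective.forall.2 fun x => ?_
    rw [← QuotientGroup.mk_pow, QuotientGroup.eq_one_iff, mem_subgroupOf]
    exact subset_closure ⟨x, rfl⟩
  exact ⟨M, inferInstance, isCyclic_of_le hMN,
    finiteIndex_of_finite_quotient_subgroupOf (K := N)⟩

namespace Subgroup

variable {G : Type*} [Group G] (M : Subgroup G)

def stabilityGroup : Subgroup (MulAut G) where
  carrier := {f | (∀ m ∈ M, f m = m) ∧ ∀ g, g⁻¹ * f g ∈ M}
  one_mem' := ⟨fun _ _ => rfl, fun g => by simp [M.one_mem]⟩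
  mul_mem' := by
    rintro f f' ⟨hf, hfM⟩ ⟨hf', hf'M⟩
    refine ⟨fun m hm => by simp [hf' m hm, hf m hm], fun g => ?_⟩
    have : g⁻¹ * f (f' g) = (g⁻¹ * f g) * (g⁻¹ * f' g) := by
      conv_lhs => rw [← mul_inv_cancel_left g (f' g), map_mul, hf _ (hf'M g)]
      group
    simpa [this] using M.mul_mem (hfM g) (hf'M g)
  inv_mem' := by
    rintro f ⟨hf, hfM⟩
    refine ⟨fun m hm => f.injective (by simp [hf m hm]), fun g => ?_⟩
    simpa using M.inv_mem (hfM (f⁻¹ g))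

def _root_.MulAut.quotientOfCharacteristic [M.Characteristic] : MulAut G →* MulAut (G ⧸ M) where
  toFun φ := QuotientGroup.congr M M φ (characteristic_iff_map_eq.mp ‹_› φ)
  map_one' := by
    ext x
    induction x using QuotientGroup.induction_on
    rfl
  map_mul' φ ψ := by
    ext x
    induction x using QuotientGroup.induction_on
    rfl

instance finiteIndex_stabilityGroup [M.Characteristic] [M.FiniteIndex] [Finite (MulAut M)] :
    (stabilityGroup M).FiniteIndex := by
  refine finiteIndex_of_le (H := (MulAut.characteristic M).ker ⊓
    (MulAut.quotientOfCharacteristic M).ker) ?_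
  rintro f ⟨hres, hquot⟩
  refine ⟨fun m hm => congrArg (fun e : MulAut M => (e ⟨m, hm⟩ : G)) hres, fun g => ?_⟩
  exact QuotientGroup.eq.1 (congrArg (fun e : MulAut (G ⧸ M) => e g) hquot).symm

namespace stabilityGroup

variable {M}

def deviation (f : stabilityGroup M) (g : G) : M := ⟨g⁻¹ * (f : MulAut G) g, f.2.2 g⟩

theorem coe_deviation (f : stabilityGroup M) (g : G) :
    (deviation f g : G) = g⁻¹ * (f : MulAut G) g := rfl

theorem deviation_mul_aut (f f' : stabilityGroup M) (g : G) :
    deviation (f * f') g = deviation f g * deviation f' g := by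
  ext
  change g⁻¹ * (f : MulAut G) ((f' : MulAut G) g) =
    (g⁻¹ * (f : MulAut G) g) * (g⁻¹ * (f' : MulAut G) g)
  conv_lhs => rw [← mul_inv_cancel_left g ((f' : MulAut G) g), map_mul, f.2.1 _ (f'.2.2 g)]
  group

theorem deviation_mul (f : stabilityGroup M) (g h : G) :
    (deviation f (g * h) : G) = h⁻¹ * deviation f g * h * deviation f h := by
  simp only [coe_deviation, map_mul]
  group

theorem coe_pow_apply (f : stabilityGroup M) (k : ℕ) (g : G) :
    ((f ^ k : stabilityGroup M) : MulAut G) g = g * deviation f g ^ k := by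
  induction k with
  | zero => simp
  | succ k ih =>
    have hfg : g * (deviation f g : G) = (f : MulAut G) g := mul_inv_cancel_left _ _
    rw [pow_succ', coe_mul, MulAut.mul_apply, ih, map_mul, f.2.1 _ (pow_mem (deviation f g).2 k),
      pow_succ', ← mul_assoc, hfg]

open scoped IsMulCommutative

variable [IsMulCommutative M]

theorem deviation_mul_of_mem (f : stabilityGroup M) (g : G) {m : G} (hm : m ∈ M) :
    deviation f (g * m) = deviation f g := by
  have hfix : deviation f m = 1 := by ext; simp [coe_deviation, f.2.1 m hm]
  have hcomm := congrArg Subtype.val (mul_comm (⟨m, hm⟩ : M) (deviation f g))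
  ext
  rw [deviation_mul, hfix]
  simp only [coe_mul] at hcomm
  simp [mul_assoc, ← hcomm]

theorem deviation_out_mk (f : stabilityGroup M) (g : G) :
    deviation f (QuotientGroup.mk g : G ⧸ M).out = deviation f g := by
  obtain ⟨m, hm⟩ := QuotientGroup.mk_out_eq_mul M g
  rw [hm, deviation_mul_of_mem f g m.2]

variable [M.Normal] [Fintype (G ⧸ M)]

noncomputable def deviationProd : stabilityGroup M →* M where
  toFun f := ∏ q : G ⧸ M, deviation f q.out
  map_one' := by
    refine Finset.prod_eq_one fun q _ => ?_
    ext
    simp [coe_deviation]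
  map_mul' f f' := by
    simp only [deviation_mul_aut, Finset.prod_mul_distrib]

theorem coe_deviation_pow_card (f : stabilityGroup M) (h : G) :
    (deviation f h ^ Fintype.card (G ⧸ M) : G) =
      h⁻¹ * (deviationProd f : G)⁻¹ * h * deviationProd f := by
  have hshift : ∀ q : G ⧸ M,
      deviation f (q * (h : G ⧸ M)).out =
        (MulAut.conjNormal (H := M) h)⁻¹ (deviation f q.out) * deviation f h := by
    refine QuotientGroup.mk_surjective.forall.2 fun g => ?_
    rw [← QuotientGroup.mk_mul, deviation_out_mk, deviation_out_mk]
    ext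
    rw [deviation_mul, coe_mul, MulAut.conjNormal_inv_apply]
  have hprod : deviationProd f =
      (MulAut.conjNormal (H := M) h)⁻¹ (deviationProd f) *
        deviation f h ^ Fintype.card (G ⧸ M) := by
    calc deviationProd f = ∏ q : G ⧸ M, deviation f (q * (h : G ⧸ M)).out :=
          (Fintype.prod_equiv (Equiv.mulRight (h : G ⧸ M)) _ _ fun _ => rfl).symm
      _ = _ := by
          simp only [hshift, Finset.prod_mul_distrib, Finset.prod_const, Finset.card_univ,
            ← map_prod]
          rfl
  rw [← coe_pow, eq_inv_mul_of_mul_eq hprod.symm, coe_mul, coe_inv, MulAut.conjNormal_inv_apply]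
  group

theorem coe_pow_card_eq_conj (f : stabilityGroup M) :
    ((f ^ Fintype.card (G ⧸ M) : stabilityGroup M) : MulAut G) =
      MulAut.conj ((deviationProd f : G)⁻¹) := by
  ext g
  rw [coe_pow_apply, coe_deviation_pow_card, MulAut.conj_apply]
  group

theorem deviationProd_injective [IsMulTorsionFree M] :
    Function.Injective (deviationProd (M := M)) := by
  refine (injective_iff_map_eq_one _).2 fun f hf => ?_
  have hpow := coe_pow_card_eq_conj f
  rw [hf, OneMemClass.coe_one, inv_one, map_one] at hpow
  ext g
  have hdev : deviation f g = 1 := by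
    refine IsMulTorsionFree.pow_left_injective (Fintype.card_ne_zero (α := G ⧸ M)) ?_
    have := coe_pow_apply f (Fintype.card (G ⧸ M)) g
    rw [hpow, MulAut.one_apply, left_eq_mul] at this
    ext
    simpa only [one_pow, coe_pow, OneMemClass.coe_one] using this
  have := congrArg Subtype.val hdev
  rw [coe_deviation, OneMemClass.coe_one, inv_mul_eq_one] at this
  exact this.symm

instance [IsCyclic M] [IsMulTorsionFree M] : IsCyclic (stabilityGroup M) :=
  isCyclic_of_injective _ deviationProd_injective

end stabilityGroup

theorem finite_stabilityGroup_quotient_innAut [M.Normal] [IsCyclic M] [IsMulTorsionFree M]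
    [Fintype (G ⧸ M)] :
    Finite (stabilityGroup M ⧸ (innAut G).subgroupOf (stabilityGroup M)) := by
  have : IsCyclic (stabilityGroup M ⧸ (innAut G).subgroupOf (stabilityGroup M)) :=
    isCyclic_of_surjective _ (QuotientGroup.mk'_surjective _)
  refine IsCyclic.finite_of_pow_eq_one (Fintype.card_ne_zero (α := G ⧸ M)) ?_
  refine QuotientGroup.mk_surjective.forall.2 fun f => ?_
  rw [← QuotientGroup.mk_pow, QuotientGroup.eq_one_iff, mem_subgroupOf,
    stabilityGroup.coe_pow_card_eq_conj]
  exact ⟨_, rfl⟩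

end Subgroup

/-- The outer automorphism group of a virtually cyclic group is finite. -/
theorem out_finite_of_virtually_cyclic (G : Type*) [Group G] (H : Subgroup G)
    (hc : IsCyclic ↥H) (hfin : H.FiniteIndex) :
    Finite (OutAut G) := by
  rcases finite_or_infinite G with _ | hG
  · exact Quotient.finite _
  obtain ⟨M, _, _, _⟩ := exists_characteristic_isCyclic_finiteIndex H
  have : Infinite M := not_finite_iff_infinite.1 fun hM => not_finite_iff_infinite.2 hG
    ((finite_iff_finite_and_finiteIndex M).2 ⟨hM, inferInstance⟩)
  have := Fintype.ofFinite (G ⧸ M)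
  have := M.finite_stabilityGroup_quotient_innAut
  have : (innAut G).FiniteIndex :=
    finiteIndex_of_finite_quotient_subgroupOf (K := M.stabilityGroup)
  infer_instance
end
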